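/- Let K be a compact set, b > 0, κ > 0, k ∈ {0,1}, and ν̄₀ ∈ 𝓗^k(m̄). Define ν̄(t,x,w) = e^{bt} ν̄₀(x, e^{bt} w), the solution of the transport equation ∂_t ν̄ − b ∂_w(w ν̄) = 0 with initial datum ν̄₀. Then for all t ≥ 0: ‖ν̄(t)‖_{𝓗^k(m̄)} ≤ exp( (k + 1/2) b t ) ‖ν̄₀‖_{𝓗^k(m̄)}. -/
import Mathlib


open MeasureTheory Real Set

noncomputable section

/-- The marginal weight `m̄(w) = (2π/κ)^{1/2} exp(κ w²/2)`. -/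
noncomputable def weightBar (κ w : ℝ) : ℝ :=
  Real.sqrt (2 * Real.pi / κ) * Real.exp (κ * w ^ 2 / 2)

/-- The weighted `H^k` norm with weight `m` on `ℝ`. -/
noncomputable def HkBarW (k : ℕ) (m : ℝ → ℝ) (g : ℝ → ℝ) : ℝ :=
  Real.sqrt (∑ l ∈ Finset.range (k + 1), ∫ w : ℝ, (iteratedDeriv l g w) ^ 2 * m w)

lemma aux_deriv_scale (f : ℝ → ℝ) {c a : ℝ} (hc : c ≠ 0) (ha : a ≠ 0) (w : ℝ) :
    deriv (fun w => c * f (a * w)) w = c * a * deriv f (a * w) := by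
  by_cases hf : DifferentiableAt ℝ f (a * w)
  · have hlin : HasDerivAt (fun w : ℝ => a * w) a w := by
      simpa using (hasDerivAt_id w).const_mul a
    have h := ((hf.hasDerivAt.comp w hlin).const_mul c).deriv
    simp only [Function.comp_def] at h
    rw [h]; ring
  · have hg : ¬ DifferentiableAt ℝ (fun w => c * f (a * w)) w := by
      intro h
      apply hf
      have h2 : DifferentiableAt ℝ (fun w => f (a * w)) w := by
        have := h.const_mul c⁻¹
        simpa [inv_mul_cancel_left₀ hc] using this
      have h3 : DifferentiableAt ℝ ((fun w => f (a * w)) ∘ fun u : ℝ => a⁻¹ * u) (a * w) := by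
        apply DifferentiableAt.comp
        · simpa [inv_mul_cancel_left₀ ha] using h2
        · exact differentiableAt_id.const_mul _
      simpa [Function.comp_def, mul_inv_cancel_left₀ ha] using h3
    rw [deriv_zero_of_not_differentiableAt hg, deriv_zero_of_not_differentiableAt hf, mul_zero]

lemma aux_weightBar_mono (κ : ℝ) {w v : ℝ} (hκ : 0 < κ) (h : w ^ 2 ≤ v ^ 2) :
    weightBar κ w ≤ weightBar κ v := by
  unfold weightBar
  apply mul_le_mul_of_nonneg_left _ (Real.sqrt_nonneg _)
  exact Real.exp_le_exp.2 (by nlinarith)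

lemma aux_key_int (f : ℝ → ℝ) {κ a : ℝ} (hκ : 0 < κ) (ha : 1 ≤ a)
    (hint : Integrable (fun w => (f w) ^ 2 * weightBar κ w)) :
    (∫ w, (f (a * w)) ^ 2 * weightBar κ w) ≤ a⁻¹ * ∫ w, (f w) ^ 2 * weightBar κ w := by
  have ha0 : 0 < a := lt_of_lt_of_le one_pos ha
  have h1 : Integrable (fun w => (f (a * w)) ^ 2 * weightBar κ (a * w)) :=
    hint.comp_mul_left' (ne_of_gt ha0)
  have h2 : (∫ w, (f (a * w)) ^ 2 * weightBar κ (a * w))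
      = a⁻¹ * ∫ w, (f w) ^ 2 * weightBar κ w := by
    rw [MeasureTheory.Measure.integral_comp_mul_left (fun u => (f u) ^ 2 * weightBar κ u) a,
      smul_eq_mul, abs_of_pos (inv_pos.mpr ha0)]
  rw [← h2]
  refine integral_mono_of_nonneg ?_ h1 ?_
  · filter_upwards with w
    exact mul_nonneg (sq_nonneg _) (mul_nonneg (Real.sqrt_nonneg _) (Real.exp_nonneg _))
  · filter_upwards with w
    apply mul_le_mul_of_nonneg_left _ (sq_nonneg _)
    exact aux_weightBar_mono κ hκ (by nlinarith [sq_nonneg w, mul_le_mul ha ha zero_le_one ha0.le])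

lemma aux_iter_scale (f : ℝ → ℝ) {a : ℝ} (ha : 0 < a) {l : ℕ} (hl : l ≤ 1) (w : ℝ) :
    iteratedDeriv l (fun w => a * f (a * w)) w = a ^ (l + 1) * iteratedDeriv l f (a * w) := by
  interval_cases l
  · simp [iteratedDeriv_zero]
  · rw [iteratedDeriv_one, iteratedDeriv_one,
      aux_deriv_scale f (ne_of_gt ha) (ne_of_gt ha)]
    ring


/-- exponential growth estimate, in `𝓗^k(m̄)` for `k ∈ {0,1}`, for the
solution `ν̄(t,x,w) = e^{bt} ν̄₀(x, e^{bt} w)` of the limiting transport equation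
`∂_t ν̄ - b ∂_w (w ν̄) = 0`. -/
theorem stmt16 (d : ℕ) (K : Set (EuclideanSpace ℝ (Fin d))) (hK : IsCompact K)
    (b κ : ℝ) (hb : 0 < b) (hκ : 0 < κ) (k : ℕ) (hk : k ≤ 1)
    (ν₀ : EuclideanSpace ℝ (Fin d) → ℝ → ℝ)
    -- `ν̄₀ ∈ 𝓗^k(m̄)`
    (hmem : ∀ x ∈ K, ∀ l : ℕ, l ≤ k →
      Integrable (fun w => (iteratedDeriv l (ν₀ x) w) ^ 2 * weightBar κ w))
    (hbdd : ∃ M : ℝ, ∀ x ∈ K, HkBarW k (weightBar κ) (ν₀ x) ≤ M) :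
    ∀ t : ℝ, 0 ≤ t →
      (⨆ x ∈ K, HkBarW k (weightBar κ)
          (fun w => Real.exp (b * t) * ν₀ x (Real.exp (b * t) * w)))
        ≤ Real.exp (((k : ℝ) + 1 / 2) * b * t) *
            ⨆ x ∈ K, HkBarW k (weightBar κ) (ν₀ x) := by
  obtain ⟨M, hM⟩ := hbdd
  intro t ht
  set a := Real.exp (b * t) with ha_def
  have ha1 : 1 ≤ a := Real.one_le_exp (mul_nonneg hb.le ht)
  have ha0 : 0 < a := lt_of_lt_of_le one_pos ha1
  set E := Real.exp (((k : ℝ) + 1 / 2) * b * t) with hE_def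
  have hE0 : 0 ≤ E := Real.exp_nonneg _
  have hEsq : a ^ (2 * k + 1) = E ^ 2 := by
    rw [ha_def, hE_def, sq, ← Real.exp_add, ← Real.exp_nat_mul]
    congr 1; push_cast; ring
  -- per-x estimate
  have key : ∀ x ∈ K,
      HkBarW k (weightBar κ) (fun w => a * ν₀ x (a * w))
        ≤ E * HkBarW k (weightBar κ) (ν₀ x) := by
    intro x hx
    unfold HkBarW
    have hsum : (∑ l ∈ Finset.range (k + 1),
        ∫ w : ℝ, (iteratedDeriv l (fun w => a * ν₀ x (a * w)) w) ^ 2 * weightBar κ w)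
        ≤ a ^ (2 * k + 1) * ∑ l ∈ Finset.range (k + 1),
          ∫ w : ℝ, (iteratedDeriv l (ν₀ x) w) ^ 2 * weightBar κ w := by
      rw [Finset.mul_sum]
      apply Finset.sum_le_sum
      intro l hl
      have hlk : l ≤ k := Nat.lt_succ_iff.mp (Finset.mem_range.mp hl)
      have hl1 : l ≤ 1 := le_trans hlk hk
      have hIf_nonneg : 0 ≤ ∫ w : ℝ, (iteratedDeriv l (ν₀ x) w) ^ 2 * weightBar κ w :=
        integral_nonneg fun w => mul_nonneg (sq_nonneg _)
          (mul_nonneg (Real.sqrt_nonneg _) (Real.exp_nonneg _))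
      have hpow : (a ^ (l + 1)) ^ 2 * a⁻¹ = a ^ (2 * l + 1) := by
        rw [← pow_mul, show (l + 1) * 2 = (2 * l + 1) + 1 by ring, pow_succ, mul_assoc,
          mul_inv_cancel₀ (ne_of_gt ha0), mul_one]
      calc (∫ w : ℝ, (iteratedDeriv l (fun w => a * ν₀ x (a * w)) w) ^ 2 * weightBar κ w)
          = (a ^ (l + 1)) ^ 2 *
              ∫ w : ℝ, (iteratedDeriv l (ν₀ x) (a * w)) ^ 2 * weightBar κ w := by
            rw [← integral_const_mul]
            congr 1
            funext w
            rw [aux_iter_scale (ν₀ x) ha0 hl1 w]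
            ring
        _ ≤ (a ^ (l + 1)) ^ 2 *
              (a⁻¹ * ∫ w : ℝ, (iteratedDeriv l (ν₀ x) w) ^ 2 * weightBar κ w) :=
            mul_le_mul_of_nonneg_left
              (aux_key_int (iteratedDeriv l (ν₀ x)) hκ ha1 (hmem x hx l hlk)) (sq_nonneg _)
        _ = a ^ (2 * l + 1) * ∫ w : ℝ, (iteratedDeriv l (ν₀ x) w) ^ 2 * weightBar κ w := by
            rw [← mul_assoc, hpow]
        _ ≤ a ^ (2 * k + 1) * ∫ w : ℝ, (iteratedDeriv l (ν₀ x) w) ^ 2 * weightBar κ w :=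
            mul_le_mul_of_nonneg_right (pow_le_pow_right₀ ha1 (by omega)) hIf_nonneg
    calc Real.sqrt (∑ l ∈ Finset.range (k + 1),
          ∫ w : ℝ, (iteratedDeriv l (fun w => a * ν₀ x (a * w)) w) ^ 2 * weightBar κ w)
        ≤ Real.sqrt (a ^ (2 * k + 1) * ∑ l ∈ Finset.range (k + 1),
            ∫ w : ℝ, (iteratedDeriv l (ν₀ x) w) ^ 2 * weightBar κ w) :=
          Real.sqrt_le_sqrt hsum
      _ = E * Real.sqrt (∑ l ∈ Finset.range (k + 1),
            ∫ w : ℝ, (iteratedDeriv l (ν₀ x) w) ^ 2 * weightBar κ w) := by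
          rw [hEsq, Real.sqrt_mul (sq_nonneg E), Real.sqrt_sq hE0]
  -- sup manipulation
  set F : EuclideanSpace ℝ (Fin d) → ℝ := fun x => HkBarW k (weightBar κ) (ν₀ x) with hF_def
  have hF0 : ∀ x, 0 ≤ F x := fun x => Real.sqrt_nonneg _
  have hbdd2 : BddAbove (Set.range fun x => ⨆ _ : x ∈ K, F x) := by
    refine ⟨max M 0, ?_⟩
    rintro _ ⟨x, rfl⟩
    dsimp only
    by_cases hx : x ∈ K
    · haveI : Nonempty (x ∈ K) := ⟨hx⟩
      rw [ciSup_const]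
      exact le_max_of_le_left (hM x hx)
    · haveI : IsEmpty (x ∈ K) := ⟨fun h => hx h⟩
      rw [Real.iSup_of_isEmpty]
      exact le_max_right _ _
  set S := ⨆ x, ⨆ _ : x ∈ K, F x with hS_def
  have hFS : ∀ x ∈ K, F x ≤ S := by
    intro x hx
    haveI : Nonempty (x ∈ K) := ⟨hx⟩
    have := le_ciSup hbdd2 x
    rwa [ciSup_const] at this
  have hS0 : 0 ≤ S := by
    obtain ⟨x0⟩ : Nonempty (EuclideanSpace ℝ (Fin d)) := inferInstance
    refine le_trans ?_ (le_ciSup hbdd2 x0)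
    by_cases hx : x0 ∈ K
    · haveI : Nonempty (x0 ∈ K) := ⟨hx⟩
      rw [ciSup_const]; exact hF0 _
    · haveI : IsEmpty (x0 ∈ K) := ⟨fun h => hx h⟩
      rw [Real.iSup_of_isEmpty]
  refine Real.iSup_le (fun x => Real.iSup_le (fun hx => ?_) (mul_nonneg hE0 hS0))
    (mul_nonneg hE0 hS0)
  exact le_trans (key x hx) (mul_le_mul_of_nonneg_left (hFS x hx) hE0)
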